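/- Let s, t > 0 be real numbers, let G = (V, E) be a finite simple graph with V nonempty, and let T := ‖V‖ − (s + t + 1)·|V|. Suppose T ≥ 0 and the minimum degree of G satisfies δ(G) > s + t + 1 + T. Then T < s + t + 2. -/

import Mathlib

open Finset

/-- `G.edgesIn X` is the number of edges of the induced subgraph `G[X]`. -/
noncomputable def SimpleGraph.edgesIn {V : Type*} (G : SimpleGraph V) (X : Finset V) : ℕ :=
  {e ∈ G.edgeSet | ∀ v ∈ e, v ∈ X}.ncard

namespace SimpleGraph

variable {V : Type*} [Fintype V] (G : SimpleGraph V) [DecidableRel G.Adj]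

theorem edgesIn_univ : G.edgesIn univ = #G.edgeFinset := by
  rw [edgesIn, ← Set.ncard_coe_finset, coe_edgeFinset]
  simp

theorem card_mul_minDegree_le_two_mul_card_edgeFinset :
    Fintype.card V * G.minDegree ≤ 2 * #G.edgeFinset := by
  rw [← sum_degrees_eq_twice_card_edges, ← card_univ, ← smul_eq_mul, ← sum_const]
  exact sum_le_sum fun v _ ↦ G.minDegree_le_degree v

/-- With `T = ‖V‖ - a|V|`, averaging degrees gives `|V| (T - a) < 2T`, while `δ(G) < |V|` gives
`|V| > T + a + 1`; the two are incompatible once `T ≥ a + 1`, because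
`(T + a + 1)(T - a) - 2T = (T - a - 1)(T + a)` (and trivially when `T + a < 0`). -/
theorem card_edgeFinset_sub_mul_card_lt [Nonempty V] (a : ℝ)
    (h : a + (#G.edgeFinset - a * Fintype.card V) < G.minDegree) :
    #G.edgeFinset - a * Fintype.card V < a + 1 := by
  have hcard : (G.minDegree : ℝ) + 1 ≤ Fintype.card V := by exact_mod_cast G.minDegree_lt_card
  have hsum : (Fintype.card V : ℝ) * G.minDegree ≤ 2 * #G.edgeFinset := by
    exact_mod_cast G.card_mul_minDegree_le_two_mul_card_edgeFinset
  set n : ℝ := (Fintype.card V : ℝ)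
  set T : ℝ := #G.edgeFinset - a * n
  replace hsum : n * G.minDegree ≤ 2 * (T + a * n) := by linarith
  have hn : 1 ≤ n := by linarith [(G.minDegree.cast_nonneg : (0 : ℝ) ≤ G.minDegree)]
  have haverage : n * (T - a) < 2 * T := by
    linarith [mul_lt_mul_of_pos_left h (by linarith : (0 : ℝ) < n)]
  by_contra! hT
  have hpos : 0 < T - a := by linarith
  rcases le_or_gt 0 (T + a) with hTa | hTa
  · have hn' : T + a + 1 ≤ n := by linarith
    have hquad : 2 * T ≤ (T + a + 1) * (T - a) := by nlinarith [mul_nonneg (sub_nonneg.2 hT) hTa]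
    linarith [mul_le_mul_of_nonneg_right hn' hpos.le]
  · linarith [mul_le_mul_of_nonneg_right hn hpos.le]

end SimpleGraph

theorem T_lt_of_minDegree_general {V : Type*} [Fintype V] [Nonempty V]
    (G : SimpleGraph V) [DecidableRel G.Adj] (s t : ℝ)
    (hdeg : s + t + 1 + ((G.edgesIn Finset.univ : ℝ) - (s + t + 1) * Fintype.card V) <
      (G.minDegree : ℝ)) :
    (G.edgesIn Finset.univ : ℝ) - (s + t + 1) * Fintype.card V < s + t + 2 := by
  rw [G.edgesIn_univ] at hdeg ⊢
  linarith [G.card_edgeFinset_sub_mul_card_lt (s + t + 1) hdeg]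

/-- If `T = ‖V‖ - (s+t+1)|V| ≥ 0` and the minimum degree satisfies
`δ(G) > s + t + 1 + T`, then `T < s + t + 2`. -/
theorem T_lt_of_minDegree {V : Type*} [Fintype V] [Nonempty V]
    (G : SimpleGraph V) [DecidableRel G.Adj] (s t : ℝ) (hs : 0 < s) (ht : 0 < t)
    (hT : 0 ≤ (G.edgesIn Finset.univ : ℝ) - (s + t + 1) * Fintype.card V)
    (hdeg : s + t + 1 + ((G.edgesIn Finset.univ : ℝ) - (s + t + 1) * Fintype.card V) <
      (G.minDegree : ℝ)) :
    (G.edgesIn Finset.univ : ℝ) - (s + t + 1) * Fintype.card V < s + t + 2 :=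
  T_lt_of_minDegree_general G s t hdeg
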